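/- arXiv:2001.07346 — 4 statements merged into one kernel-verified Lean document; each statement's English description precedes it below -/
import Mathlib

section
/- Let C be a nonempty closed convex subset of a real Hilbert space H, T: C → C nonexpansive with Fix(T) ≠ ∅, u ∈ C fixed, and sequences {ψₙ}, {νₙ} ⊂ (0,1), {δₙ} ⊂ [0,∞) satisfying: (D1) νₙ → 0 and ∑νₙ = ∞; (D2) (δₙ/νₙ)‖xₙ − xₙ₋₁‖ → 0. Then the sequence defined by wₙ = xₙ + δₙ(xₙ − xₙ₋₁), yₙ = ψₙwₙ + (1−ψₙ)Twₙ, xₙ₊₁ = νₙu + (1−νₙ)yₙ converges strongly to p = P_{Fix(T)}u, where P_{Fix(T)} is the metric projection onto Fix(T), provided additionally ψₙ(1−ψₙ) is bounded away from 0 along the relevant subsequences (e.g. {ψₙ} ⊂ [a,b] ⊂ (0,1)). -/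
/-!
Put `p = P_{Fix T} u`, `Aₙ = ‖xₙ - p‖²` and `sₙ = (δₙ / νₙ) ‖xₙ - xₙ₋₁‖`. Nonexpansiveness and the
identity `‖t a + (1 - t) b‖² = t ‖a‖² + (1 - t) ‖b‖² - t (1 - t) ‖a - b‖²` give
`Aₙ₊₁ ≤ (1 - νₙ) Aₙ + νₙ (2 ⟪u - p, xₙ₊₁ - p⟫ + K sₙ) - (1 - νₙ) ψₙ (1 - ψₙ) ‖wₙ - T wₙ‖²`.
By Maingé's lemma it suffices that the middle bracket has `limsup ≤ 0` along every subsequence on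
which the last term tends to `0`. Along such a subsequence `‖wₙ - T wₙ‖ → 0` and `xₙ₊₁ - wₙ → 0`;
a weak cluster point `z` of `wₙ` is a fixed point of `T` by demiclosedness, and
`⟪u - p, z - p⟫ ≤ 0` is the variational characterisation of the projection onto the convex set
`Fix T`.
-/

open Filter Topology
open scoped RealInnerProductSpace

theorem tendsto_prod_Ico_one_sub_of_not_summable {ν : ℕ → ℝ} (hν : ∀ n, ν n ∈ Set.Icc (0 : ℝ) 1)
    (hνsum : ¬ Summable ν) (N : ℕ) :
    Tendsto (fun n => ∏ k ∈ Finset.Ico N n, (1 - ν k)) atTop (𝓝 0) := by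
  have hsum : Tendsto (fun n => ∑ k ∈ Finset.Ico N n, ν k) atTop atTop := by
    have := (not_summable_iff_tendsto_nat_atTop_of_nonneg fun n => (hν n).1).1 hνsum
    refine (tendsto_atTop_add_const_right _ (-∑ k ∈ Finset.range N, ν k) this).congr' ?_
    filter_upwards [eventually_ge_atTop N] with n hn
    rw [Finset.sum_Ico_eq_sub _ hn]; ring
  refine squeeze_zero (fun n => Finset.prod_nonneg fun k _ => sub_nonneg.2 (hν k).2)
    (fun n => ?_) (Real.tendsto_exp_atBot.comp (tendsto_neg_atTop_atBot.comp hsum))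
  rw [Function.comp_apply, Function.comp_apply, ← Finset.sum_neg_distrib, Real.exp_sum]
  exact Finset.prod_le_prod (fun k _ => sub_nonneg.2 (hν k).2) fun k _ => by
    linarith [Real.add_one_le_exp (-ν k)]

theorem tendsto_zero_of_le_one_sub_mul_add {A b ν : ℕ → ℝ} (hA : ∀ n, 0 ≤ A n)
    (hν : ∀ n, ν n ∈ Set.Icc (0 : ℝ) 1) (hνsum : ¬ Summable ν)
    (hb : ∀ ε > 0, ∀ᶠ n in atTop, b n < ε)
    (hrec : ∀ n, A (n + 1) ≤ (1 - ν n) * A n + ν n * b n) :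
    Tendsto A atTop (𝓝 0) := by
  refine tendsto_order.2 ⟨fun a ha => .of_forall fun n => ha.trans_le (hA n), fun ε hε => ?_⟩
  obtain ⟨N, hN⟩ := (hb (ε / 2) (half_pos hε)).exists_forall_of_atTop
  set Q := fun n => ∏ k ∈ Finset.Ico N n, (1 - ν k)
  have hle : ∀ n ≥ N, A n ≤ ε / 2 + Q n * A N := by
    intro n hn
    induction n, hn using Nat.le_induction with
    | base => simp only [Q, Finset.Ico_self, Finset.prod_empty, one_mul]; linarith
    | succ n hn ih =>
      have h1 := (hν n).1
      have h2 := (hν n).2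
      calc A (n + 1) ≤ (1 - ν n) * A n + ν n * b n := hrec n
        _ ≤ (1 - ν n) * (ε / 2 + Q n * A N) + ν n * (ε / 2) := by
          gcongr
          exact (hN n hn).le
        _ = ε / 2 + Q (n + 1) * A N := by
          simp only [Q, Finset.prod_Ico_succ_top hn]; ring
  have hQ : Tendsto (fun n => ε / 2 + Q n * A N) atTop (𝓝 (ε / 2)) := by
    simpa using
      ((tendsto_prod_Ico_one_sub_of_not_summable hν hνsum N).mul_const (A N)).const_add (ε / 2)
  filter_upwards [eventually_ge_atTop N, hQ.eventually (gt_mem_nhds (half_lt_self hε))]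
    with n hn hlt using (hle n hn).trans_lt hlt

theorem exists_tendsto_atTop_lt_succ_le {α : Type*} [LinearOrder α] {A : ℕ → α}
    (h : ∃ᶠ n in atTop, A n < A (n + 1)) :
    ∃ τ : ℕ → ℕ, Tendsto τ atTop atTop ∧
      ∀ᶠ n in atTop, A (τ n) < A (τ n + 1) ∧ A n ≤ A (τ n + 1) := by
  classical
  -- `τ n` is the last ascent of `A` up to time `n`
  set P : ℕ → Prop := fun k => A k < A (k + 1)
  set τ := fun n => Nat.findGreatest P n
  have hτle (n : ℕ) : τ n ≤ n := Nat.findGreatest_le n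
  have hτmax (n k : ℕ) (hk : τ n < k) (hkn : k ≤ n) : A (k + 1) ≤ A k :=
    not_lt.1 (Nat.findGreatest_is_greatest hk hkn)
  obtain ⟨n₀, hn₀⟩ := h.exists
  refine ⟨τ, tendsto_atTop.2 fun N => ?_, ?_⟩
  · obtain ⟨n₁, hn₁, hPn₁⟩ := (frequently_atTop.1 h) N
    filter_upwards [eventually_ge_atTop n₁] with n hn using hn₁.trans (Nat.le_findGreatest hn hPn₁)
  filter_upwards [eventually_ge_atTop n₀] with n hn
  have hτ : A (τ n) < A (τ n + 1) := Nat.findGreatest_spec (P := P) hn hn₀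
  refine ⟨hτ, ?_⟩
  rcases (hτle n).lt_or_eq with hlt | heq
  · have : ∀ k, τ n < k → k ≤ n → A k ≤ A (τ n + 1) := by
      intro k hk
      induction k, hk using Nat.le_induction with
      | base => exact fun _ => le_rfl
      | succ k hk ih => exact fun hkn => (hτmax n k hk (by omega)).trans (ih (by omega))
    exact this n hlt le_rfl
  · rw [heq] at hτ
    rw [heq]
    exact hτ.le

theorem tendsto_sub_add_one_of_eventually_le {A : ℕ → ℝ} (hA : ∀ n, 0 ≤ A n)
    (h : ∀ᶠ n in atTop, A (n + 1) ≤ A n) : Tendsto (fun n => A n - A (n + 1)) atTop (𝓝 0) := by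
  obtain ⟨N, hN⟩ := h.exists_forall_of_atTop
  have hanti : Antitone fun n => A (n + N) :=
    antitone_nat_of_succ_le fun n => by simpa [Nat.add_right_comm] using hN (n + N) (by omega)
  have hlim := (tendsto_add_atTop_iff_nat N).1
    (tendsto_atTop_ciInf hanti ⟨0, Set.forall_mem_range.2 fun n => hA _⟩)
  simpa using hlim.sub ((tendsto_add_atTop_iff_nat 1).2 hlim)

theorem tendsto_zero_of_le_one_sub_mul_add_sub {A b c ν : ℕ → ℝ} (hA : ∀ n, 0 ≤ A n)
    (hc : ∀ n, 0 ≤ c n) (hν : ∀ n, ν n ∈ Set.Ioc (0 : ℝ) 1) (hν0 : Tendsto ν atTop (𝓝 0))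
    (hνsum : ¬ Summable ν) (hbB : BddAbove (Set.range b))
    (hrec : ∀ n, A (n + 1) ≤ (1 - ν n) * A n + ν n * b n - c n)
    (hb : ∀ φ : ℕ → ℕ, Tendsto φ atTop atTop → Tendsto (c ∘ φ) atTop (𝓝 0) →
      ∀ ε > 0, ∀ᶠ k in atTop, b (φ k) < ε) :
    Tendsto A atTop (𝓝 0) := by
  obtain ⟨B, hB⟩ := hbB
  replace hB (n : ℕ) : b n ≤ B := hB ⟨n, rfl⟩
  have hνB : Tendsto (fun n => ν n * B) atTop (𝓝 0) := by simpa using hν0.mul_const B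
  by_cases hasc : ∃ᶠ n in atTop, A n < A (n + 1)
  · obtain ⟨τ, hτ, hτA⟩ := exists_tendsto_atTop_lt_succ_le hasc
    -- at an ascent, `ν (τ n) * A (τ n) < ν (τ n) * b (τ n) - c (τ n)`
    have hcτ : Tendsto (c ∘ τ) atTop (𝓝 0) := by
      refine squeeze_zero' (.of_forall fun n => hc _) ?_ (hνB.comp hτ)
      filter_upwards [hτA] with n ⟨hlt, _⟩
      have := hrec (τ n); have := hB (τ n); have := hA (τ n); have := (hν (τ n)).1
      simp only [Function.comp_apply]; nlinarith
    have hAτ : ∀ ε > 0, ∀ᶠ n in atTop, A (τ n) < ε := fun ε hε => by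
      filter_upwards [hτA, hb τ hτ hcτ ε hε] with n ⟨hlt, _⟩ hbε
      have := hrec (τ n); have := hc (τ n); have := (hν (τ n)).1
      nlinarith
    refine tendsto_order.2 ⟨fun a ha => .of_forall fun n => ha.trans_le (hA n), fun ε hε => ?_⟩
    filter_upwards [hτA, hAτ (ε / 2) (half_pos hε),
      (hνB.comp hτ).eventually (gt_mem_nhds (half_pos hε))] with n ⟨_, hle⟩ hAε hνε
    have := hrec (τ n); have := hc (τ n); have := hB (τ n); have := hA (τ n)
    have := (hν (τ n)).1
    simp only [Function.comp_apply] at hνε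
    nlinarith
  · have hdiff := tendsto_sub_add_one_of_eventually_le hA
      ((not_frequently.1 hasc).mono fun n => not_lt.1)
    have hc0 : Tendsto c atTop (𝓝 0) := by
      refine squeeze_zero hc (fun n => ?_) (by simpa using hdiff.add hνB)
      have := hrec n; have := hB n; have := hA n; have := (hν n).1
      nlinarith
    exact tendsto_zero_of_le_one_sub_mul_add hA (fun n => Set.Ioc_subset_Icc_self (hν n)) hνsum
      (hb id tendsto_id hc0) fun n => (hrec n).trans (sub_le_self _ (hc n))

theorem eventually_lt_of_forall_exists_subseq_tendsto {f : ℕ → ℝ}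
    (h : ∀ σ : ℕ → ℕ, StrictMono σ →
      ∃ ρ : ℕ → ℕ, StrictMono ρ ∧ ∃ L ≤ 0, Tendsto (f ∘ σ ∘ ρ) atTop (𝓝 L))
    {ε : ℝ} (hε : 0 < ε) : ∀ᶠ n in atTop, f n < ε := by
  by_contra hcon
  obtain ⟨σ, hσ, hσε⟩ := extraction_of_frequently_atTop (not_eventually.1 hcon)
  obtain ⟨ρ, -, L, hL, hlim⟩ := h σ hσ
  have : ε ≤ L := ge_of_tendsto' hlim fun k => not_lt.1 (hσε (ρ k))
  linarith

theorem le_max_of_le_one_sub_mul_add {a ν : ℕ → ℝ} {C : ℝ} (hν : ∀ n, ν n ∈ Set.Icc (0 : ℝ) 1)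
    (h : ∀ n, a (n + 1) ≤ (1 - ν n) * a n + ν n * C) (n : ℕ) : a n ≤ max (a 0) C := by
  induction n with
  | zero => exact le_max_left _ _
  | succ n ih =>
    calc a (n + 1) ≤ (1 - ν n) * a n + ν n * C := h n
      _ ≤ (1 - ν n) * max (a 0) C + ν n * max (a 0) C :=
        add_le_add (mul_le_mul_of_nonneg_left ih (sub_nonneg.2 (hν n).2))
          (mul_le_mul_of_nonneg_left (le_max_right _ _) (hν n).1)
      _ = max (a 0) C := by ring

theorem tendsto_zero_of_tendsto_mul_of_eventually_le {ι : Type*} {l : Filter ι} {α d : ι → ℝ}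
    {κ : ℝ} (hκ : 0 < κ) (hα : ∀ᶠ k in l, κ ≤ α k) (hd : ∀ k, 0 ≤ d k)
    (h : Tendsto (fun k => α k * d k) l (𝓝 0)) : Tendsto d l (𝓝 0) := by
  refine squeeze_zero' (.of_forall hd) ?_ (by simpa using h.div_const κ)
  filter_upwards [hα] with k hk
  rw [le_div_iff₀ hκ]
  nlinarith [hd k]

theorem tendsto_zero_of_tendsto_mul_sq_of_mem_Icc {ψ ν d : ℕ → ℝ} {a b : ℝ} (ha : 0 < a)
    (hb : b < 1) (hψ : ∀ n, ψ n ∈ Set.Icc a b) (hν0 : Tendsto ν atTop (𝓝 0))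
    (hd : ∀ n, 0 ≤ d n)
    (hc : Tendsto (fun n => (1 - ν n) * (ψ n * (1 - ψ n)) * d n ^ 2) atTop (𝓝 0)) :
    Tendsto d atTop (𝓝 0) := by
  have hab : 0 < a * (1 - b) := mul_pos ha (by linarith)
  have hα : ∀ᶠ n in atTop, a * (1 - b) / 2 ≤ (1 - ν n) * (ψ n * (1 - ψ n)) := by
    filter_upwards [hν0.eventually (ge_mem_nhds one_half_pos)] with n hn
    have hψψ : a * (1 - b) ≤ ψ n * (1 - ψ n) :=
      mul_le_mul (hψ n).1 (by linarith [(hψ n).2]) (by linarith) (ha.le.trans (hψ n).1)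
    nlinarith [mul_le_mul (show 1 / 2 ≤ 1 - ν n by linarith) hψψ hab.le (by linarith)]
  have hsq := tendsto_zero_of_tendsto_mul_of_eventually_le (half_pos hab) hα
    (fun n => sq_nonneg _) hc
  simpa [Real.sqrt_sq (hd _)] using hsq.sqrt

section InnerProductSpace

variable {H : Type*} [NormedAddCommGroup H] [InnerProductSpace ℝ H]

theorem norm_smul_add_smul_sq {a b : ℝ} (hab : a + b = 1) (x y : H) :
    ‖a • x + b • y‖ ^ 2 = a * ‖x‖ ^ 2 + b * ‖y‖ ^ 2 - a * b * ‖x - y‖ ^ 2 := by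
  rw [norm_add_sq_real, norm_sub_sq_real, norm_smul, norm_smul, real_inner_smul_left,
    real_inner_smul_right, Real.norm_eq_abs, Real.norm_eq_abs, mul_pow, mul_pow, sq_abs, sq_abs]
  obtain rfl := eq_sub_of_add_eq hab
  ring

theorem norm_smul_add_one_sub_smul_sub_sq_le {t : ℝ} (ht : t ∈ Set.Icc (0 : ℝ) 1) {w v p : H}
    (hv : ‖v - p‖ ≤ ‖w - p‖) :
    ‖t • w + (1 - t) • v - p‖ ^ 2 ≤ ‖w - p‖ ^ 2 - t * (1 - t) * ‖w - v‖ ^ 2 := by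
  have hsplit : t • w + (1 - t) • v - p = t • (w - p) + (1 - t) • (v - p) := by module
  rw [hsplit, norm_smul_add_smul_sq (add_sub_cancel t 1), sub_sub_sub_cancel_right]
  have : (1 - t) * ‖v - p‖ ^ 2 ≤ (1 - t) * ‖w - p‖ ^ 2 :=
    mul_le_mul_of_nonneg_left (pow_le_pow_left₀ (norm_nonneg _) hv 2) (sub_nonneg.2 ht.2)
  linarith

theorem norm_smul_add_one_sub_smul_sub_sq_le_inner {t : ℝ} (ht : t ∈ Set.Icc (0 : ℝ) 1)
    (u y p : H) :
    ‖t • u + (1 - t) • y - p‖ ^ 2 ≤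
      (1 - t) * ‖y - p‖ ^ 2 + 2 * t * ⟪u - p, t • u + (1 - t) • y - p⟫ := by
  have hX : t • u + (1 - t) • y - p = (1 - t) • (y - p) + t • (u - p) := by module
  rw [hX]
  set a := (1 - t) • (y - p)
  set b := t • (u - p)
  have h1 : ‖a + b‖ ^ 2 ≤ ‖a‖ ^ 2 + 2 * ⟪b, a + b⟫ := by
    rw [norm_add_sq_real, inner_add_right, real_inner_self_eq_norm_sq, real_inner_comm]
    nlinarith [sq_nonneg ‖b‖]
  have h2 : ‖a‖ ^ 2 ≤ (1 - t) * ‖y - p‖ ^ 2 := by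
    rw [norm_smul, mul_pow, Real.norm_eq_abs, sq_abs]
    have : (1 - t) ^ 2 ≤ 1 - t := by nlinarith [ht.1, ht.2]
    exact mul_le_mul_of_nonneg_right this (sq_nonneg _)
  have h3 : ⟪b, a + b⟫ = t * ⟪u - p, a + b⟫ := real_inner_smul_left _ _ _
  linarith

theorem convex_inter_fixedPoints {C : Set H} (hCv : Convex ℝ C) {T : H → H}
    (hT : ∀ x ∈ C, ∀ y ∈ C, ‖T x - T y‖ ≤ ‖x - y‖) :
    Convex ℝ (C ∩ Function.fixedPoints T) := by
  rintro q ⟨hqC, hq⟩ r ⟨hrC, hr⟩ s t hs ht hst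
  have hmC := hCv hqC hrC hs ht hst
  refine ⟨hmC, ?_⟩
  obtain rfl := eq_sub_of_add_eq hst
  set m := (1 - t) • q + t • r
  have hq' : ‖T m - q‖ ≤ t * ‖q - r‖ := by
    calc ‖T m - q‖ = ‖T m - T q‖ := by rw [hq.eq]
      _ ≤ ‖m - q‖ := hT m hmC q hqC
      _ = t * ‖q - r‖ := by
        rw [show m - q = t • (r - q) by module, norm_smul, Real.norm_eq_abs, abs_of_nonneg ht,
          norm_sub_rev]
  have hr' : ‖T m - r‖ ≤ (1 - t) * ‖q - r‖ := by
    calc ‖T m - r‖ = ‖T m - T r‖ := by rw [hr.eq]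
      _ ≤ ‖m - r‖ := hT m hmC r hrC
      _ = (1 - t) * ‖q - r‖ := by
        rw [show m - r = (1 - t) • (q - r) by module, norm_smul, Real.norm_eq_abs,
          abs_of_nonneg hs]
  have hid := norm_smul_add_smul_sq hst (T m - q) (T m - r)
  rw [show (1 - t) • (T m - q) + t • (T m - r) = T m - m by module,
    sub_sub_sub_cancel_left, norm_sub_rev r q] at hid
  have h1 : ‖T m - q‖ ^ 2 ≤ (t * ‖q - r‖) ^ 2 := by gcongr
  have h2 : ‖T m - r‖ ^ 2 ≤ ((1 - t) * ‖q - r‖) ^ 2 := by gcongr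
  have : ‖T m - m‖ ^ 2 ≤ 0 := by
    rw [hid]
    nlinarith [mul_le_mul_of_nonneg_left h1 hs, mul_le_mul_of_nonneg_left h2 ht]
  exact sub_eq_zero.1 (norm_eq_zero.1 ((sq_nonpos_iff _).1 this))

theorem inner_sub_nonpos_of_forall_norm_sub_le {K : Set H} (hK : Convex ℝ K) {u p : H}
    (hp : p ∈ K) (hmin : ∀ q ∈ K, ‖u - p‖ ≤ ‖u - q‖) {q : H} (hq : q ∈ K) :
    ⟪u - p, q - p⟫ ≤ 0 := by
  refine (norm_eq_iInf_iff_real_inner_le_zero hK hp).1 ?_ q hq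
  have : Nonempty K := ⟨⟨p, hp⟩⟩
  exact le_antisymm (le_ciInf fun w => hmin w w.2)
    (ciInf_le (f := fun w : K => ‖u - w‖)
      ⟨0, Set.forall_mem_range.2 fun w => norm_nonneg _⟩ ⟨p, hp⟩)

def WeakTendsto (v : ℕ → H) (z : H) : Prop :=
  ∀ m : H, Tendsto (fun k => ⟪m, v k⟫) atTop (𝓝 ⟪m, z⟫)

theorem exists_strictMono_weakTendsto [CompleteSpace H] {v : ℕ → H} {B : ℝ}
    (hB : ∀ k, ‖v k‖ ≤ B) : ∃ z : H, ∃ σ : ℕ → ℕ, StrictMono σ ∧ WeakTendsto (v ∘ σ) z := by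
  -- sequential Banach–Alaoglu in the separable closed span of the sequence
  set M : Submodule ℝ H := (Submodule.span ℝ (Set.range v)).topologicalClosure
  have : TopologicalSpace.SeparableSpace M :=
    (Set.countable_range v).isSeparable.span.closure.separableSpace
  have hvM (k : ℕ) : v k ∈ M :=
    Submodule.le_topologicalClosure _ (Submodule.subset_span ⟨k, rfl⟩)
  obtain ⟨f, -, σ, hσ, hf⟩ := WeakDual.isSeqCompact_closedBall ℝ M 0 B
    (x := fun k => StrongDual.toWeakDual (InnerProductSpace.toDual ℝ M ⟨v k, hvM k⟩))
    fun k => by simpa using hB k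
  set z := (InnerProductSpace.toDual ℝ M).symm (WeakDual.toStrongDual f)
  refine ⟨z, σ, hσ, fun m => ?_⟩
  have hm := ((WeakDual.eval_continuous (M.orthogonalProjectionOnto m)).tendsto f).comp hf
  have hz : ⟪m, (z : H)⟫ = f (M.orthogonalProjectionOnto m) := by
    rw [real_inner_comm, ← Submodule.inner_orthogonalProjectionOnto_eq_of_mem_left]
    exact InnerProductSpace.toDual_symm_apply
  rw [hz]
  convert hm using 2 with k
  simp [real_inner_comm]

theorem WeakTendsto.of_tendsto_norm_sub {v v' : ℕ → H} {z : H} (hv : WeakTendsto v z)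
    (hvv' : Tendsto (fun k => ‖v' k - v k‖) atTop (𝓝 0)) : WeakTendsto v' z := by
  intro m
  have hsmall : Tendsto (fun k => ⟪m, v' k - v k⟫) atTop (𝓝 0) :=
    squeeze_zero_norm (fun k => norm_inner_le_norm m _) (by simpa using hvv'.const_mul ‖m‖)
  simpa [inner_sub_right] using (hv m).add hsmall

theorem WeakTendsto.mem_of_isClosed_of_convex [CompleteSpace H] {C : Set H} (hCc : IsClosed C)
    (hCv : Convex ℝ C) {v : ℕ → H} {z : H} (hvC : ∀ k, v k ∈ C) (hv : WeakTendsto v z) :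
    z ∈ C := by
  obtain ⟨c, hcC, hc⟩ :=
    exists_norm_eq_iInf_of_complete_convex ⟨v 0, hvC 0⟩ hCc.isComplete hCv z
  have hle := (norm_eq_iInf_iff_real_inner_le_zero hCv hcC).1 hc
  have hlim : Tendsto (fun k => ⟪z - c, v k - c⟫) atTop (𝓝 ⟪z - c, z - c⟫) := by
    simpa only [inner_sub_right] using (hv (z - c)).sub_const ⟪z - c, c⟫
  have : ⟪z - c, z - c⟫ ≤ 0 := le_of_tendsto' hlim fun k => hle _ (hvC k)
  rw [real_inner_self_nonpos, sub_eq_zero] at this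
  rwa [this]

theorem WeakTendsto.apply_eq_of_tendsto_norm_sub_apply {C : Set H} {T : H → H}
    (hT : ∀ x ∈ C, ∀ y ∈ C, ‖T x - T y‖ ≤ ‖x - y‖) {v : ℕ → H} {z : H} {B : ℝ}
    (hv : WeakTendsto v z) (hvC : ∀ k, v k ∈ C) (hzC : z ∈ C) (hvB : ∀ k, ‖v k - z‖ ≤ B)
    (hTv : Tendsto (fun k => ‖v k - T (v k)‖) atTop (𝓝 0)) : T z = z := by
  set d := z - T z
  have hle (k : ℕ) :
      ‖d‖ ^ 2 ≤ ‖v k - T (v k)‖ ^ 2 + 2 * B * ‖v k - T (v k)‖ - 2 * ⟪d, v k - z⟫ := by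
    have h1 : ‖v k - T z‖ ≤ ‖v k - T (v k)‖ + ‖v k - z‖ := by
      calc ‖v k - T z‖ = ‖(v k - T (v k)) + (T (v k) - T z)‖ := by rw [sub_add_sub_cancel]
        _ ≤ ‖v k - T (v k)‖ + ‖T (v k) - T z‖ := norm_add_le _ _
        _ ≤ ‖v k - T (v k)‖ + ‖v k - z‖ := by gcongr; exact hT _ (hvC k) z hzC
    have h2 : ‖v k - T z‖ ^ 2 = ‖v k - z‖ ^ 2 + 2 * ⟪d, v k - z⟫ + ‖d‖ ^ 2 := by
      rw [show v k - T z = (v k - z) + d by simp only [d]; abel, norm_add_sq_real,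
        real_inner_comm]
    nlinarith [norm_nonneg (v k - T (v k)), norm_nonneg (v k - z), hvB k,
      norm_nonneg (v k - T z)]
  have hdz : Tendsto (fun k => ⟪d, v k - z⟫) atTop (𝓝 0) := by
    simpa only [inner_sub_right, sub_self] using (hv d).sub_const ⟪d, z⟫
  have hlim := ((hTv.pow 2).add (hTv.const_mul (2 * B))).sub (hdz.const_mul 2)
  simp only [ne_eq, OfNat.ofNat_ne_zero, not_false_eq_true, zero_pow, mul_zero, add_zero,
    sub_zero] at hlim
  have : ‖d‖ ^ 2 ≤ 0 := ge_of_tendsto' hlim hle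
  exact (sub_eq_zero.1 (norm_eq_zero.1 ((sq_nonpos_iff _).1 this))).symm

theorem exists_strictMono_weakTendsto_inner_sub_nonpos [CompleteSpace H] {C : Set H}
    (hCc : IsClosed C) (hCv : Convex ℝ C) {T : H → H}
    (hT : ∀ x ∈ C, ∀ y ∈ C, ‖T x - T y‖ ≤ ‖x - y‖) {u p : H} (hpC : p ∈ C) (hp : T p = p)
    (hproj : ∀ q ∈ C, T q = q → ‖u - p‖ ≤ ‖u - q‖) {v : ℕ → H} {B : ℝ} (hvC : ∀ k, v k ∈ C)
    (hvB : ∀ k, ‖v k‖ ≤ B) (hTv : Tendsto (fun k => ‖v k - T (v k)‖) atTop (𝓝 0)) :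
    ∃ z : H, ∃ σ : ℕ → ℕ, StrictMono σ ∧ WeakTendsto (v ∘ σ) z ∧ ⟪u - p, z - p⟫ ≤ 0 := by
  obtain ⟨z, σ, hσ, hvz⟩ := exists_strictMono_weakTendsto hvB
  have hzC := hvz.mem_of_isClosed_of_convex hCc hCv fun k => hvC (σ k)
  have hTz : T z = z := hvz.apply_eq_of_tendsto_norm_sub_apply hT (fun k => hvC (σ k)) hzC
    (B := B + ‖z‖) (fun k => (norm_sub_le _ _).trans (by gcongr; exact hvB (σ k)))
    (hTv.comp hσ.tendsto_atTop)
  exact ⟨z, σ, hσ, hvz, inner_sub_nonpos_of_forall_norm_sub_le (convex_inter_fixedPoints hCv hT)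
    ⟨hpC, hp⟩ (fun q hq => hproj q hq.1 hq.2) ⟨hzC, hTz⟩⟩

theorem norm_smul_add_smul_le {s t : ℝ} (hs : 0 ≤ s) (ht : 0 ≤ t) (a b : H) :
    ‖s • a + t • b‖ ≤ s * ‖a‖ + t * ‖b‖ := by
  simpa only [norm_smul_of_nonneg hs, norm_smul_of_nonneg ht] using norm_add_le (s • a) (t • b)

namespace MannHalpern

variable {T : H → H} {u p w y z : H} {ψ ν : ℝ}

theorem norm_mann_sub_le (hψ : ψ ∈ Set.Icc (0 : ℝ) 1) (hTw : ‖T w - p‖ ≤ ‖w - p‖)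
    (hy : y = ψ • w + (1 - ψ) • T w) : ‖y - p‖ ≤ ‖w - p‖ := by
  have h := norm_smul_add_smul_le hψ.1 (sub_nonneg.2 hψ.2) (w - p) (T w - p)
  rw [show ψ • (w - p) + (1 - ψ) • (T w - p) = y - p by rw [hy]; module] at h
  nlinarith [hψ.1, hψ.2]

theorem norm_sub_le (hψ : ψ ∈ Set.Icc (0 : ℝ) 1) (hν : ν ∈ Set.Icc (0 : ℝ) 1)
    (hTw : ‖T w - p‖ ≤ ‖w - p‖) (hy : y = ψ • w + (1 - ψ) • T w)
    (hz : z = ν • u + (1 - ν) • y) : ‖z - p‖ ≤ ν * ‖u - p‖ + (1 - ν) * ‖w - p‖ := by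
  have h := norm_smul_add_smul_le hν.1 (sub_nonneg.2 hν.2) (u - p) (y - p)
  rw [show ν • (u - p) + (1 - ν) • (y - p) = z - p by rw [hz]; module] at h
  nlinarith [norm_mann_sub_le hψ hTw hy, hν.2]

theorem norm_sub_sq_le (hψ : ψ ∈ Set.Icc (0 : ℝ) 1) (hν : ν ∈ Set.Icc (0 : ℝ) 1)
    (hTw : ‖T w - p‖ ≤ ‖w - p‖) (hy : y = ψ • w + (1 - ψ) • T w)
    (hz : z = ν • u + (1 - ν) • y) :
    ‖z - p‖ ^ 2 ≤ (1 - ν) * ‖w - p‖ ^ 2 + 2 * ν * ⟪u - p, z - p⟫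
      - (1 - ν) * (ψ * (1 - ψ)) * ‖w - T w‖ ^ 2 := by
  have hhalpern := norm_smul_add_one_sub_smul_sub_sq_le_inner hν u y p
  have hmann := norm_smul_add_one_sub_smul_sub_sq_le hψ hTw
  rw [← hz] at hhalpern
  rw [← hy] at hmann
  nlinarith [mul_le_mul_of_nonneg_left hmann (sub_nonneg.2 hν.2)]

theorem norm_sub_input_le (hψ : ψ ∈ Set.Icc (0 : ℝ) 1) (hν : ν ∈ Set.Icc (0 : ℝ) 1)
    (hTw : ‖T w - p‖ ≤ ‖w - p‖) (hy : y = ψ • w + (1 - ψ) • T w)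
    (hz : z = ν • u + (1 - ν) • y) :
    ‖z - w‖ ≤ ν * (‖u - p‖ + ‖w - p‖) + ‖w - T w‖ := by
  have h := norm_smul_add_smul_le hν.1 (sub_nonneg.2 hψ.2) (u - y) (T w - w)
  rw [show ν • (u - y) + (1 - ψ) • (T w - w) = z - w by rw [hz, hy]; module,
    norm_sub_rev (T w)] at h
  have huy : ‖u - y‖ ≤ ‖u - p‖ + ‖w - p‖ :=
    (norm_sub_le_norm_sub_add_norm_sub u p y).trans
      (by rw [norm_sub_rev p y]; gcongr; exact norm_mann_sub_le hψ hTw hy)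
  nlinarith [hν.1, hψ.1, norm_nonneg (w - T w)]

end MannHalpern

namespace InertialMannHalpern

-- `x (n + 1)` is the paper's `xₙ`; `w`, `y`, `ψ`, `ν`, `δ` keep the paper's indices.
variable {T : H → H} {u p : H} {x w y : ℕ → H} {ψ ν δ s : ℕ → ℝ}

theorem norm_inertial_sub_le (hδ : ∀ n, 0 ≤ δ n)
    (hw : ∀ n, w n = x (n + 1) + δ n • (x (n + 1) - x n))
    (hs : ∀ n, δ n * ‖x (n + 1) - x n‖ ≤ ν n * s n) (n : ℕ) :
    ‖w n - p‖ ≤ ‖x (n + 1) - p‖ + ν n * s n := by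
  calc ‖w n - p‖ = ‖(x (n + 1) - p) + δ n • (x (n + 1) - x n)‖ := by rw [hw n]; abel_nf
    _ ≤ ‖x (n + 1) - p‖ + δ n * ‖x (n + 1) - x n‖ := by
      rw [← norm_smul_of_nonneg (hδ n)]; exact norm_add_le _ _
    _ ≤ ‖x (n + 1) - p‖ + ν n * s n := by linarith [hs n]

theorem norm_sub_le_max (hψ : ∀ n, ψ n ∈ Set.Icc (0 : ℝ) 1)
    (hν : ∀ n, ν n ∈ Set.Icc (0 : ℝ) 1) (hδ : ∀ n, 0 ≤ δ n)
    (hTw : ∀ n, ‖T (w n) - p‖ ≤ ‖w n - p‖)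
    (hw : ∀ n, w n = x (n + 1) + δ n • (x (n + 1) - x n))
    (hy : ∀ n, y n = ψ n • w n + (1 - ψ n) • T (w n))
    (hx : ∀ n, x (n + 2) = ν n • u + (1 - ν n) • y n)
    (hs : ∀ n, δ n * ‖x (n + 1) - x n‖ ≤ ν n * s n) (hs0 : ∀ n, 0 ≤ s n) {S : ℝ}
    (hS : ∀ n, s n ≤ S) (n : ℕ) :
    ‖x (n + 1) - p‖ ≤ max ‖x 1 - p‖ (‖u - p‖ + S) := by
  refine le_max_of_le_one_sub_mul_add (a := fun n => ‖x (n + 1) - p‖) hν (fun n => ?_) n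
  show ‖x (n + 2) - p‖ ≤ (1 - ν n) * ‖x (n + 1) - p‖ + ν n * (‖u - p‖ + S)
  have hstep := MannHalpern.norm_sub_le (hψ n) (hν n) (hTw n) (hy n) (hx n)
  have hinert := norm_inertial_sub_le (p := p) hδ hw hs n
  have hν0 := (hν n).1
  have hν1 := (hν n).2
  have h1 := mul_le_mul_of_nonneg_left hinert (sub_nonneg.2 hν1)
  have h2 : (1 - ν n) * (ν n * s n) ≤ ν n * S :=
    (mul_le_of_le_one_left (mul_nonneg hν0 (hs0 n)) (by linarith)).trans
      (mul_le_mul_of_nonneg_left (hS n) hν0)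
  nlinarith

theorem norm_sub_sq_le (hψ : ∀ n, ψ n ∈ Set.Icc (0 : ℝ) 1)
    (hν : ∀ n, ν n ∈ Set.Icc (0 : ℝ) 1) (hδ : ∀ n, 0 ≤ δ n)
    (hTw : ∀ n, ‖T (w n) - p‖ ≤ ‖w n - p‖)
    (hw : ∀ n, w n = x (n + 1) + δ n • (x (n + 1) - x n))
    (hy : ∀ n, y n = ψ n • w n + (1 - ψ n) • T (w n))
    (hx : ∀ n, x (n + 2) = ν n • u + (1 - ν n) • y n)
    (hs : ∀ n, δ n * ‖x (n + 1) - x n‖ ≤ ν n * s n) (hs0 : ∀ n, 0 ≤ s n) {S M : ℝ}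
    (hS : ∀ n, s n ≤ S) (hM : ∀ n, ‖x (n + 1) - p‖ ≤ M) (n : ℕ) :
    ‖x (n + 2) - p‖ ^ 2 ≤ (1 - ν n) * ‖x (n + 1) - p‖ ^ 2
      + ν n * (2 * ⟪u - p, x (n + 2) - p⟫ + (2 * M + S) * s n)
      - (1 - ν n) * (ψ n * (1 - ψ n)) * ‖w n - T (w n)‖ ^ 2 := by
  have hstep := MannHalpern.norm_sub_sq_le (hψ n) (hν n) (hTw n) (hy n) (hx n)
  have hinert := norm_inertial_sub_le (p := p) hδ hw hs n
  have hν0 := (hν n).1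
  have hν1 := (hν n).2
  have hνs : 0 ≤ ν n * s n := mul_nonneg hν0 (hs0 n)
  have hνsS : ν n * s n ≤ S := (mul_le_of_le_one_left (hs0 n) hν1).trans (hS n)
  have hw2 : ‖w n - p‖ ^ 2 ≤ ‖x (n + 1) - p‖ ^ 2 + ν n * ((2 * M + S) * s n) := by
    have hsq := pow_le_pow_left₀ (norm_nonneg _) hinert 2
    have hlin := mul_le_mul_of_nonneg_left
      (show 2 * ‖x (n + 1) - p‖ + ν n * s n ≤ 2 * M + S by linarith [hM n]) hνs
    nlinarith
  have hK : 0 ≤ (2 * M + S) * s n :=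
    mul_nonneg (by linarith [norm_nonneg (x (n + 1) - p), hM n, hs0 n, hS n]) (hs0 n)
  have h1 := mul_le_mul_of_nonneg_left hw2 (sub_nonneg.2 hν1)
  have h2 : (1 - ν n) * (ν n * ((2 * M + S) * s n)) ≤ ν n * ((2 * M + S) * s n) :=
    mul_le_of_le_one_left (mul_nonneg hν0 hK) (by linarith)
  nlinarith

theorem eventually_inner_sub_add_lt [CompleteSpace H] {C : Set H} (hCc : IsClosed C) (hCv : Convex ℝ C)
    (hT : ∀ x ∈ C, ∀ y ∈ C, ‖T x - T y‖ ≤ ‖x - y‖) (hpC : p ∈ C) (hp : T p = p)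
    (hproj : ∀ q ∈ C, T q = q → ‖u - p‖ ≤ ‖u - q‖) {a b K R : ℝ} (ha : 0 < a) (hb : b < 1)
    (hψ : ∀ n, ψ n ∈ Set.Icc a b) (hν : ∀ n, ν n ∈ Set.Icc (0 : ℝ) 1)
    (hν0 : Tendsto ν atTop (𝓝 0)) (hs0 : Tendsto s atTop (𝓝 0)) (hwC : ∀ n, w n ∈ C)
    (hwR : ∀ n, ‖w n - p‖ ≤ R) (hy : ∀ n, y n = ψ n • w n + (1 - ψ n) • T (w n))
    (hx : ∀ n, x (n + 2) = ν n • u + (1 - ν n) • y n) {φ : ℕ → ℕ}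
    (hφ : Tendsto φ atTop atTop)
    (hc : Tendsto (fun k => (1 - ν (φ k)) * (ψ (φ k) * (1 - ψ (φ k)))
      * ‖w (φ k) - T (w (φ k))‖ ^ 2) atTop (𝓝 0))
    {ε : ℝ} (hε : 0 < ε) :
    ∀ᶠ k in atTop, 2 * ⟪u - p, x (φ k + 2) - p⟫ + K * s (φ k) < ε := by
  have hψ01 (n : ℕ) : ψ n ∈ Set.Icc (0 : ℝ) 1 := ⟨ha.le.trans (hψ n).1, (hψ n).2.trans hb.le⟩
  have hTw (n : ℕ) : ‖T (w n) - p‖ ≤ ‖w n - p‖ := by simpa [hp] using hT _ (hwC n) p hpC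
  refine eventually_lt_of_forall_exists_subseq_tendsto
    (f := fun k => 2 * ⟪u - p, x (φ k + 2) - p⟫ + K * s (φ k)) (fun σ hσ => ?_) hε
  have hφσ : Tendsto (φ ∘ σ) atTop atTop := hφ.comp hσ.tendsto_atTop
  have hwT : Tendsto (fun k => ‖w (φ (σ k)) - T (w (φ (σ k)))‖) atTop (𝓝 0) :=
    tendsto_zero_of_tendsto_mul_sq_of_mem_Icc (ψ := fun k => ψ (φ (σ k)))
      (ν := fun k => ν (φ (σ k))) ha hb (fun k => hψ _) (hν0.comp hφσ) (fun k => norm_nonneg _)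
      (hc.comp hσ.tendsto_atTop)
  obtain ⟨z, ρ, hρ, hwz, hzp⟩ := exists_strictMono_weakTendsto_inner_sub_nonpos hCc hCv hT hpC hp
    hproj (v := fun k => w (φ (σ k))) (fun k => hwC _)
    (fun k => (norm_le_norm_sub_add _ p).trans (add_le_add_left (hwR _) _)) hwT
  have hφσρ : Tendsto (fun k => φ (σ (ρ k))) atTop atTop := hφσ.comp hρ.tendsto_atTop
  have hxz : WeakTendsto (fun k => x (φ (σ (ρ k)) + 2)) z := by
    refine hwz.of_tendsto_norm_sub (squeeze_zero (fun k => norm_nonneg _) (fun k =>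
      (MannHalpern.norm_sub_input_le (hψ01 _) (hν _) (hTw _) (hy _) (hx _)).trans ?_)
      (by simpa using ((hν0.comp hφσρ).mul_const (‖u - p‖ + R)).add (hwT.comp hρ.tendsto_atTop)))
    have := hwR (φ (σ (ρ k)))
    have := (hν (φ (σ (ρ k)))).1
    nlinarith
  refine ⟨ρ, hρ, 2 * ⟪u - p, z - p⟫, by linarith, ?_⟩
  simpa [Function.comp_def, inner_sub_right] using
    (((hxz (u - p)).sub_const ⟪u - p, p⟫).const_mul 2).add ((hs0.comp hφσρ).const_mul K)

theorem tendsto_add_one [CompleteSpace H] {C : Set H} (hCc : IsClosed C) (hCv : Convex ℝ C)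
    (hT : ∀ x ∈ C, ∀ y ∈ C, ‖T x - T y‖ ≤ ‖x - y‖) (hpC : p ∈ C) (hp : T p = p)
    (hproj : ∀ q ∈ C, T q = q → ‖u - p‖ ≤ ‖u - q‖) {a b : ℝ} (ha : 0 < a) (hb : b < 1)
    (hψ : ∀ n, ψ n ∈ Set.Icc a b) (hν : ∀ n, ν n ∈ Set.Ioc (0 : ℝ) 1)
    (hν0 : Tendsto ν atTop (𝓝 0)) (hνsum : ¬ Summable ν) (hδ : ∀ n, 0 ≤ δ n)
    (hwC : ∀ n, w n ∈ C) (hw : ∀ n, w n = x (n + 1) + δ n • (x (n + 1) - x n))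
    (hy : ∀ n, y n = ψ n • w n + (1 - ψ n) • T (w n))
    (hx : ∀ n, x (n + 2) = ν n • u + (1 - ν n) • y n)
    (hs : ∀ n, δ n * ‖x (n + 1) - x n‖ ≤ ν n * s n) (hs0 : ∀ n, 0 ≤ s n)
    (hslim : Tendsto s atTop (𝓝 0)) :
    Tendsto (fun n => x (n + 1)) atTop (𝓝 p) := by
  have hψ' (n : ℕ) : ψ n ∈ Set.Icc (0 : ℝ) 1 := ⟨ha.le.trans (hψ n).1, (hψ n).2.trans hb.le⟩
  have hν' (n : ℕ) : ν n ∈ Set.Icc (0 : ℝ) 1 := Set.Ioc_subset_Icc_self (hν n)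
  have hTw (n : ℕ) : ‖T (w n) - p‖ ≤ ‖w n - p‖ := by simpa [hp] using hT _ (hwC n) p hpC
  obtain ⟨S, hS⟩ := hslim.bddAbove_range
  replace hS (n : ℕ) : s n ≤ S := hS ⟨n, rfl⟩
  set M := max ‖x 1 - p‖ (‖u - p‖ + S)
  have hM := norm_sub_le_max hψ' hν' hδ hTw hw hy hx hs hs0 hS
  have hK : 0 ≤ 2 * M + S := by
    linarith [le_max_left ‖x 1 - p‖ (‖u - p‖ + S), norm_nonneg (x 1 - p), hs0 0, hS 0]
  have hbdd : BddAbove (Set.range fun n => 2 * ⟪u - p, x (n + 2) - p⟫ + (2 * M + S) * s n) := by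
    refine ⟨2 * (‖u - p‖ * M) + (2 * M + S) * S, Set.forall_mem_range.2 fun n => ?_⟩
    have := real_inner_le_norm (u - p) (x (n + 2) - p)
    have := mul_le_mul_of_nonneg_left (hM (n + 1)) (norm_nonneg (u - p))
    have := mul_le_mul_of_nonneg_left (hS n) hK
    linarith
  have hwR (n : ℕ) : ‖w n - p‖ ≤ M + S :=
    (norm_inertial_sub_le hδ hw hs n).trans
      (add_le_add (hM n) ((mul_le_of_le_one_left (hs0 n) (hν' n).2).trans (hS n)))
  have hA : Tendsto (fun n => ‖x (n + 1) - p‖ ^ 2) atTop (𝓝 0) :=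
    tendsto_zero_of_le_one_sub_mul_add_sub (fun n => sq_nonneg _)
      (fun n => mul_nonneg (mul_nonneg (sub_nonneg.2 (hν' n).2)
        (mul_nonneg (hψ' n).1 (sub_nonneg.2 (hψ' n).2))) (sq_nonneg _))
      hν hν0 hνsum hbdd (norm_sub_sq_le hψ' hν' hδ hTw hw hy hx hs hs0 hS hM)
      fun φ hφ hc ε hε => eventually_inner_sub_add_lt hCc hCv hT hpC hp hproj ha hb hψ hν' hν0 hslim hwC
        hwR hy hx hφ hc hε
  rw [tendsto_iff_norm_sub_tendsto_zero]
  simpa [Real.sqrt_sq (norm_nonneg _)] using hA.sqrt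

end InertialMannHalpern

end InnerProductSpace

theorem stmt_0_general {H : Type*} [NormedAddCommGroup H] [InnerProductSpace ℝ H] [CompleteSpace H]
    (C : Set H) (hCc : IsClosed C) (hCv : Convex ℝ C)
    (T : H → H)
    (hT : ∀ x ∈ C, ∀ y ∈ C, ‖T x - T y‖ ≤ ‖x - y‖)
    (u : H)
    (ψ ν δ : ℕ → ℝ) (a b : ℝ) (hab : 0 < a) (hb1 : b < 1)
    (hψ : ∀ n, ψ n ∈ Set.Icc a b)
    (hν : ∀ n, ν n ∈ Set.Ioo (0 : ℝ) 1) (hδ : ∀ n, 0 ≤ δ n)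
    -- (D1)
    (hν0 : Tendsto ν atTop (𝓝 0)) (hνsum : ¬ Summable ν)
    (x w y : ℕ → H)
    (hwC : ∀ n, w n ∈ C)
    -- the algorithm (`x 0` plays the role of `x₋₁` and `x 1` that of `x₀`)
    (hw : ∀ n, w (n + 1) = x (n + 1) + δ (n + 1) • (x (n + 1) - x n))
    (hy : ∀ n, y (n + 1) = ψ (n + 1) • w (n + 1) + (1 - ψ (n + 1)) • T (w (n + 1)))
    (hx : ∀ n, x (n + 2) = ν (n + 1) • u + (1 - ν (n + 1)) • y (n + 1))
    -- (D2)
    (hD2 : Tendsto (fun n => δ (n + 1) / ν (n + 1) * ‖x (n + 1) - x n‖) atTop (𝓝 0))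
    -- `p` is the metric projection of `u` onto `Fix(T)`
    (p : H) (hpC : p ∈ C) (hp : T p = p)
    (hproj : ∀ q ∈ C, T q = q → ‖u - p‖ ≤ ‖u - q‖) :
    Tendsto x atTop (𝓝 p) := by
  refine (tendsto_add_atTop_iff_nat 1).1 <|
    InertialMannHalpern.tendsto_add_one hCc hCv hT hpC hp hproj hab hb1 (fun n => hψ (n + 1))
      (fun n => Set.Ioo_subset_Ioc_self (hν (n + 1))) ((tendsto_add_atTop_iff_nat 1).2 hν0)
      (fun h => hνsum ((summable_nat_add_iff 1).1 h)) (fun n => hδ (n + 1)) (fun n => hwC (n + 1))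
      hw hy hx (fun n => ?_) (fun n => ?_) hD2
  · rw [← mul_assoc, mul_div_cancel₀ _ (hν (n + 1)).1.ne']
  · exact mul_nonneg (div_nonneg (hδ _) (hν _).1.le) (norm_nonneg _)

/-- Strong convergence of the modified inertial Mann–Halpern algorithm:
`wₙ = xₙ + δₙ(xₙ - xₙ₋₁)`, `yₙ = ψₙwₙ + (1-ψₙ)Twₙ`, `xₙ₊₁ = νₙu + (1-νₙ)yₙ`
converges strongly to `p = P_{Fix(T)} u` under (D1), (D2) and
`{ψₙ} ⊆ [a,b] ⊆ (0,1)`. -/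
theorem stmt_0 {H : Type*} [NormedAddCommGroup H] [InnerProductSpace ℝ H] [CompleteSpace H]
    (C : Set H) (hC : C.Nonempty) (hCc : IsClosed C) (hCv : Convex ℝ C)
    (T : H → H) (hTC : Set.MapsTo T C C)
    (hT : ∀ x ∈ C, ∀ y ∈ C, ‖T x - T y‖ ≤ ‖x - y‖)
    (hfix : ∃ q ∈ C, T q = q)
    (u : H) (huC : u ∈ C)
    (ψ ν δ : ℕ → ℝ) (a b : ℝ) (hab : 0 < a) (hba : a ≤ b) (hb1 : b < 1)
    (hψ : ∀ n, ψ n ∈ Set.Icc a b)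
    (hν : ∀ n, ν n ∈ Set.Ioo (0 : ℝ) 1) (hδ : ∀ n, 0 ≤ δ n)
    -- (D1)
    (hν0 : Tendsto ν atTop (𝓝 0)) (hνsum : ¬ Summable ν)
    (x w y : ℕ → H)
    (hxC : ∀ n, x n ∈ C) (hwC : ∀ n, w n ∈ C)
    -- the algorithm (`x 0` plays the role of `x₋₁` and `x 1` that of `x₀`)
    (hw : ∀ n, w (n + 1) = x (n + 1) + δ (n + 1) • (x (n + 1) - x n))
    (hy : ∀ n, y (n + 1) = ψ (n + 1) • w (n + 1) + (1 - ψ (n + 1)) • T (w (n + 1)))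
    (hx : ∀ n, x (n + 2) = ν (n + 1) • u + (1 - ν (n + 1)) • y (n + 1))
    -- (D2)
    (hD2 : Tendsto (fun n => δ (n + 1) / ν (n + 1) * ‖x (n + 1) - x n‖) atTop (𝓝 0))
    -- `p` is the metric projection of `u` onto `Fix(T)`
    (p : H) (hpC : p ∈ C) (hp : T p = p)
    (hproj : ∀ q ∈ C, T q = q → ‖u - p‖ ≤ ‖u - q‖) :
    Tendsto x atTop (𝓝 p) :=
  stmt_0_general C hCc hCv T hT u ψ ν δ a b hab hb1 hψ hν hδ hν0 hνsum x w y hwC hw hy hx hD2 p hpC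
    hp hproj
end

section
/- Let C be a nonempty closed convex subset of a real Hilbert space H and T: C → H nonexpansive. If a sequence {xₙ} in C converges weakly to x ∈ H and ‖Txₙ − xₙ‖ → 0, then x ∈ C and Tx = x (demiclosedness principle). -/
/-!
Testing the weak convergence against `p - v`, where `v` is the nearest point of `C` to `p`, gives
`0 ≤ -‖p - v‖²`, so `p ∈ C`. Expanding `‖xₙ - Tp‖² = ‖xₙ - p‖² + 2⟪xₙ - p, p - Tp⟫ + ‖p - Tp‖²` and
bounding `‖xₙ - Tp‖ ≤ ‖xₙ - Txₙ‖ + ‖xₙ - p‖` by nonexpansiveness leaves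
`‖p - Tp‖² ≤ -2⟪xₙ - p, p - Tp⟫ + ‖Txₙ - xₙ‖ (‖Txₙ - xₙ‖ + 2‖xₙ - p‖)`; the right side tends to `0`
because weakly convergent sequences are bounded (uniform boundedness).
-/

open Filter Topology

namespace WeakConvergence

variable {H : Type*} [NormedAddCommGroup H] [InnerProductSpace ℝ H] {x : ℕ → H} {p : H}

theorem tendsto_inner_sub_zero
    (hweak : ∀ v : H, Tendsto (fun n => (inner ℝ (x n) v : ℝ)) atTop (𝓝 (inner ℝ p v)))
    (v : H) : Tendsto (fun n => (inner ℝ (x n - p) v : ℝ)) atTop (𝓝 0) := by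
  simpa only [inner_sub_left, sub_self] using (hweak v).sub_const (inner ℝ p v)

theorem exists_norm_le [CompleteSpace H]
    (hweak : ∀ v : H, Tendsto (fun n => (inner ℝ (x n) v : ℝ)) atTop (𝓝 (inner ℝ p v))) :
    ∃ M, ∀ n, ‖x n‖ ≤ M := by
  have hbdd : ∀ v : H, ∃ B, ∀ n, ‖InnerProductSpace.toDual ℝ H (x n) v‖ ≤ B := by
    intro v
    obtain ⟨r, hr⟩ := (Metric.isBounded_range_of_tendsto _ (hweak v)).subset_closedBall 0
    refine ⟨r, fun n => ?_⟩
    simpa [InnerProductSpace.toDual_apply_apply] using hr ⟨n, rfl⟩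
  obtain ⟨M, hM⟩ := banach_steinhaus hbdd
  exact ⟨M, fun n => (InnerProductSpace.toDual ℝ H).norm_map (x n) ▸ hM n⟩

theorem mem_of_isClosed_of_convex [CompleteSpace H] {C : Set H} (hCc : IsClosed C)
    (hCv : Convex ℝ C) (hxC : ∀ n, x n ∈ C)
    (hweak : ∀ v : H, Tendsto (fun n => (inner ℝ (x n) v : ℝ)) atTop (𝓝 (inner ℝ p v))) :
    p ∈ C := by
  obtain ⟨v, hvC, hv⟩ :=
    exists_norm_eq_iInf_of_complete_convex ⟨x 0, hxC 0⟩ hCc.isComplete hCv p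
  have hproj := (norm_eq_iInf_iff_real_inner_le_zero hCv hvC).1 hv
  have hle : ∀ n, (inner ℝ (x n - p) (p - v) : ℝ) ≤ -‖p - v‖ ^ 2 := by
    intro n
    have h := hproj (x n) (hxC n)
    rw [show x n - v = (x n - p) + (p - v) by abel, inner_add_right,
      real_inner_self_eq_norm_sq, real_inner_comm] at h
    linarith
  have hnonneg : (0 : ℝ) ≤ -‖p - v‖ ^ 2 :=
    le_of_tendsto' (tendsto_inner_sub_zero hweak (p - v)) hle
  have hpv : p - v = 0 := norm_eq_zero.1 (by nlinarith [norm_nonneg (p - v)])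
  rwa [sub_eq_zero.1 hpv]

end WeakConvergence

theorem norm_sub_apply_sq_le {H : Type*} [NormedAddCommGroup H] [InnerProductSpace ℝ H]
    (T : H → H) {y p : H} (hT : ‖T y - T p‖ ≤ ‖y - p‖) :
    ‖p - T p‖ ^ 2 ≤ -2 * (inner ℝ (y - p) (p - T p) : ℝ)
      + ‖T y - y‖ * (‖T y - y‖ + 2 * ‖y - p‖) := by
  have htri : ‖y - T p‖ ≤ ‖T y - y‖ + ‖y - p‖ :=
    calc ‖y - T p‖ ≤ ‖y - T y‖ + ‖T y - T p‖ := norm_sub_le_norm_sub_add_norm_sub _ _ _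
      _ ≤ ‖T y - y‖ + ‖y - p‖ := by rw [norm_sub_rev y]; gcongr
  have hexpand : ‖y - T p‖ ^ 2 = ‖y - p‖ ^ 2 + 2 * (inner ℝ (y - p) (p - T p) : ℝ)
      + ‖p - T p‖ ^ 2 := by
    rw [show y - T p = (y - p) + (p - T p) by abel, norm_add_sq_real]
  nlinarith [norm_nonneg (y - T p), norm_nonneg (T y - y), norm_nonneg (y - p)]

theorem apply_eq_self_of_tendsto_inner {H : Type*} [NormedAddCommGroup H]
    [InnerProductSpace ℝ H] [CompleteSpace H] {C : Set H} {T : H → H}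
    (hT : ∀ x ∈ C, ∀ y ∈ C, ‖T x - T y‖ ≤ ‖x - y‖) {x : ℕ → H} (hxC : ∀ n, x n ∈ C)
    {p : H} (hpC : p ∈ C)
    (hweak : ∀ v : H, Tendsto (fun n => (inner ℝ (x n) v : ℝ)) atTop (𝓝 (inner ℝ p v)))
    (hasymp : Tendsto (fun n => ‖T (x n) - x n‖) atTop (𝓝 0)) :
    T p = p := by
  obtain ⟨M, hM⟩ := WeakConvergence.exists_norm_le hweak
  have hbound : ∀ n, ‖p - T p‖ ^ 2 ≤ -2 * (inner ℝ (x n - p) (p - T p) : ℝ)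
      + ‖T (x n) - x n‖ * (‖T (x n) - x n‖ + 2 * (M + ‖p‖)) := by
    intro n
    have hxp : ‖x n - p‖ ≤ M + ‖p‖ := (norm_sub_le _ _).trans (by linarith [hM n])
    refine (norm_sub_apply_sq_le T (hT _ (hxC n) _ hpC)).trans ?_
    gcongr
  have hlim : Tendsto (fun n => -2 * (inner ℝ (x n - p) (p - T p) : ℝ)
      + ‖T (x n) - x n‖ * (‖T (x n) - x n‖ + 2 * (M + ‖p‖))) atTop (𝓝 0) := by
    simpa using ((WeakConvergence.tendsto_inner_sub_zero hweak (p - T p)).const_mul (-2)).add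
      (hasymp.mul (hasymp.add_const (2 * (M + ‖p‖))))
  have hsq : ‖p - T p‖ ^ 2 ≤ 0 := ge_of_tendsto' hlim hbound
  exact (sub_eq_zero.1 (norm_eq_zero.1 (by nlinarith [norm_nonneg (p - T p)]))).symm

theorem stmt_3_general {H : Type*} [NormedAddCommGroup H] [InnerProductSpace ℝ H] [CompleteSpace H]
    (C : Set H) (hCc : IsClosed C) (hCv : Convex ℝ C)
    (T : H → H) (hT : ∀ x ∈ C, ∀ y ∈ C, ‖T x - T y‖ ≤ ‖x - y‖)
    (x : ℕ → H) (hxC : ∀ n, x n ∈ C) (p : H)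
    (hweak : ∀ v : H, Tendsto (fun n => (inner ℝ (x n) v : ℝ)) atTop (𝓝 (inner ℝ p v)))
    (hasymp : Tendsto (fun n => ‖T (x n) - x n‖) atTop (𝓝 0)) :
    p ∈ C ∧ T p = p := by
  have hpC : p ∈ C := WeakConvergence.mem_of_isClosed_of_convex hCc hCv hxC hweak
  exact ⟨hpC, apply_eq_self_of_tendsto_inner hT hxC hpC hweak hasymp⟩

/-- Demiclosedness principle: if `T` is nonexpansive on the nonempty closed convex set `C`,
`{xₙ} ⊆ C` converges weakly to `x`, and `‖Txₙ - xₙ‖ → 0`, then `x ∈ C` and `Tx = x`. -/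
theorem stmt_3 {H : Type*} [NormedAddCommGroup H] [InnerProductSpace ℝ H] [CompleteSpace H]
    (C : Set H) (hC : C.Nonempty) (hCc : IsClosed C) (hCv : Convex ℝ C)
    (T : H → H) (hT : ∀ x ∈ C, ∀ y ∈ C, ‖T x - T y‖ ≤ ‖x - y‖)
    (x : ℕ → H) (hxC : ∀ n, x n ∈ C) (p : H)
    (hweak : ∀ v : H, Tendsto (fun n => (inner ℝ (x n) v : ℝ)) atTop (𝓝 (inner ℝ p v)))
    (hasymp : Tendsto (fun n => ‖T (x n) - x n‖) atTop (𝓝 0)) :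
    p ∈ C ∧ T p = p :=
  stmt_3_general C hCc hCv T hT x hxC p hweak hasymp
end

section
/- Let H₁, H₂ be real Hilbert spaces, C ⊆ H₁ and Q ⊆ H₂ nonempty closed convex, and A: H₁ → H₂ a bounded linear operator. A point x* solves the split feasibility problem (x* ∈ C and Ax* ∈ Q) if and only if x* is a fixed point of the mapping x ↦ P_C(x − λA*(I − P_Q)Ax) for λ > 0, whenever the split feasibility problem has a solution. -/
/-!
If `x` is a fixed point of `x ↦ P_C (x - λ A* (I - P_Q) A x)` and `x̂` solves the problem, the
variational inequality of `P_C` tested at `x̂` gives `⟪(I - P_Q) A x, A x̂ - A x⟫ ≥ 0`, while that of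
`P_Q` gives `⟪(I - P_Q) A x, A x̂ - P_Q A x⟫ ≤ 0`. Subtracting, `‖(I - P_Q) A x‖² ≤ 0`, so `A x ∈ Q`.
-/

open RealInnerProductSpace

lemma eq_of_forall_norm_sub_le {E : Type*} [NormedAddGroup E] {K : Set E} {x p : E} (hx : x ∈ K)
    (hmin : ∀ y ∈ K, ‖x - p‖ ≤ ‖x - y‖) : p = x := by
  simpa [sub_eq_zero, eq_comm] using hmin x hx

section NearestPoint

variable {E : Type*} [NormedAddCommGroup E] [InnerProductSpace ℝ E]

lemma real_inner_sub_le_zero_of_forall_norm_sub_le {K : Set E} (hK : Convex ℝ K) {x p : E}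
    (hp : p ∈ K) (hmin : ∀ y ∈ K, ‖x - p‖ ≤ ‖x - y‖) : ∀ w ∈ K, ⟪x - p, w - p⟫ ≤ 0 := by
  have : Nonempty K := ⟨⟨p, hp⟩⟩
  refine (norm_eq_iInf_iff_real_inner_le_zero hK hp).1
    (le_antisymm (le_ciInf fun w ↦ hmin w w.2) ?_)
  exact ciInf_le ⟨0, by rintro _ ⟨w, rfl⟩; positivity⟩ (⟨p, hp⟩ : K)

lemma eq_of_real_inner_sub_le_zero_of_nonneg {y p q : E} (hp : ⟪y - p, q - p⟫ ≤ 0)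
    (hy : 0 ≤ ⟪y - p, q - y⟫) : y = p := by
  have hsq : ⟪y - p, y - p⟫ = ⟪y - p, q - p⟫ - ⟪y - p, q - y⟫ := by
    rw [← inner_sub_right, sub_sub_sub_cancel_left]
  exact sub_eq_zero.1 (inner_self_eq_zero.1 (le_antisymm (by linarith) real_inner_self_nonneg))

end NearestPoint

theorem stmt_11_general {H₁ H₂ : Type*}
    [NormedAddCommGroup H₁] [InnerProductSpace ℝ H₁] [CompleteSpace H₁]
    [NormedAddCommGroup H₂] [InnerProductSpace ℝ H₂] [CompleteSpace H₂]
    (C : Set H₁) (hCv : Convex ℝ C)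
    (Q : Set H₂) (hQv : Convex ℝ Q)
    (A : H₁ →L[ℝ] H₂)
    (PC : H₁ → H₁) (hPC : ∀ x, PC x ∈ C ∧ ∀ y ∈ C, ‖x - PC x‖ ≤ ‖x - y‖)
    (PQ : H₂ → H₂) (hPQ : ∀ x, PQ x ∈ Q ∧ ∀ y ∈ Q, ‖x - PQ x‖ ≤ ‖x - y‖)
    (lam : ℝ) (hlam : 0 < lam)
    (hsol : ∃ x, x ∈ C ∧ A x ∈ Q) (xs : H₁) :
    (xs ∈ C ∧ A xs ∈ Q) ↔
      PC (xs - lam • (ContinuousLinearMap.adjoint A) (A xs - PQ (A xs))) = xs := by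
  constructor
  · rintro ⟨hxC, hxQ⟩
    rw [eq_of_forall_norm_sub_le hxQ (hPQ (A xs)).2, sub_self, map_zero, smul_zero, sub_zero]
    exact eq_of_forall_norm_sub_le hxC (hPC xs).2
  · intro hfix
    obtain ⟨xh, hxhC, hxhQ⟩ := hsol
    set v := A xs - PQ (A xs)
    have hxC : xs ∈ C := hfix ▸ (hPC _).1
    set z := xs - lam • (ContinuousLinearMap.adjoint A) v
    have hvarC : 0 ≤ lam * ⟪v, A xh - A xs⟫ := by
      have := real_inner_sub_le_zero_of_forall_norm_sub_le hCv (hPC z).1 (hPC z).2 xh hxhC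
      rwa [hfix, sub_sub_cancel_left, inner_neg_left, real_inner_smul_left,
        ContinuousLinearMap.adjoint_inner_left, map_sub, neg_nonpos] at this
    have hvarQ : ⟪v, A xh - PQ (A xs)⟫ ≤ 0 :=
      real_inner_sub_le_zero_of_forall_norm_sub_le hQv (hPQ _).1 (hPQ _).2 (A xh) hxhQ
    have hAx : A xs = PQ (A xs) :=
      eq_of_real_inner_sub_le_zero_of_nonneg hvarQ (nonneg_of_mul_nonneg_right hvarC hlam)
    exact ⟨hxC, hAx ▸ (hPQ (A xs)).1⟩

/-- Fixed point characterization of the split feasibility problem: assuming SFP is solvable,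
`x* ∈ C ∧ Ax* ∈ Q` iff `x*` is a fixed point of `x ↦ P_C (x - λ A* (I - P_Q) A x)` (`λ > 0`). -/
theorem stmt_11 {H₁ H₂ : Type*}
    [NormedAddCommGroup H₁] [InnerProductSpace ℝ H₁] [CompleteSpace H₁]
    [NormedAddCommGroup H₂] [InnerProductSpace ℝ H₂] [CompleteSpace H₂]
    (C : Set H₁) (hC : C.Nonempty) (hCc : IsClosed C) (hCv : Convex ℝ C)
    (Q : Set H₂) (hQ : Q.Nonempty) (hQc : IsClosed Q) (hQv : Convex ℝ Q)
    (A : H₁ →L[ℝ] H₂)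
    (PC : H₁ → H₁) (hPC : ∀ x, PC x ∈ C ∧ ∀ y ∈ C, ‖x - PC x‖ ≤ ‖x - y‖)
    (PQ : H₂ → H₂) (hPQ : ∀ x, PQ x ∈ Q ∧ ∀ y ∈ Q, ‖x - PQ x‖ ≤ ‖x - y‖)
    (lam : ℝ) (hlam : 0 < lam)
    (hsol : ∃ x, x ∈ C ∧ A x ∈ Q) (xs : H₁) :
    (xs ∈ C ∧ A xs ∈ Q) ↔
      PC (xs - lam • (ContinuousLinearMap.adjoint A) (A xs - PQ (A xs))) = xs :=
  stmt_11_general C hCv Q hQv A PC hPC PQ hPQ lam hlam hsol xs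
end

section
/- Let x ∈ ℝⁿ with x ∉ {a₁,…,a_m}, and define the Weiszfeld operator T(x) = (∑_{i=1}^m ω_i a_i/‖x − a_i‖) / (∑_{i=1}^m ω_i/‖x − a_i‖) with all ω_i > 0. If x is a fixed point of T, then x is a minimizer of f(y) = ∑_{i=1}^m ω_i‖y − a_i‖ (the gradient of f at x vanishes). -/
/-! The fixed-point equation says that `x` is the weighted mean of the anchors with weights
`ωᵢ/‖x - aᵢ‖`, i.e. that `∑ ωᵢ (x - aᵢ)/‖x - aᵢ‖ = 0`. Each `y ↦ ‖y - aᵢ‖` lies above its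
tangent plane at `x`, by Cauchy–Schwarz, and summing these tangent planes with the weights `ωᵢ`
gives a lower bound for `f(y)` whose slope is exactly this vanishing gradient, so `f(y) ≥ f(x)`. -/

open Finset RealInnerProductSpace

section

variable {ι E : Type*} [Fintype ι]

lemma sum_smul_sub_eq_zero_of_inv_sum_smul_sum_eq [AddCommGroup E] [Module ℝ E]
    {c : ι → ℝ} (hc : ∀ i, 0 ≤ c i) {a : ι → E} {x : E}
    (hx : (∑ i, c i)⁻¹ • ∑ i, c i • a i = x) :
    ∑ i, c i • (x - a i) = 0 := by
  by_cases hS : ∑ i, c i = 0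
  · have hc0 : ∀ i, c i = 0 := fun i =>
      (sum_eq_zero_iff_of_nonneg fun j _ => hc j).mp hS i (mem_univ i)
    simp [hc0]
  · rw [sum_congr rfl fun i _ => smul_sub (c i) x (a i), sum_sub_distrib, ← sum_smul, ← hx,
      smul_inv_smul₀ hS, sub_self]

variable [NormedAddCommGroup E] [InnerProductSpace ℝ E]

-- For `u = 0` both sides degenerate harmlessly, since `⟪0, v⟫ / 0 = 0`.
lemma norm_add_inner_div_norm_le_norm_add (u v : E) : ‖u‖ + ⟪u, v⟫ / ‖u‖ ≤ ‖u + v‖ := by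
  rcases eq_or_ne u 0 with rfl | hu
  · simp
  have hpos : 0 < ‖u‖ := norm_pos_iff.mpr hu
  calc ‖u‖ + ⟪u, v⟫ / ‖u‖ = ⟪u, u + v⟫ / ‖u‖ := by
        rw [inner_add_right, real_inner_self_eq_norm_sq]
        field_simp
    _ ≤ ‖u‖ * ‖u + v‖ / ‖u‖ := by gcongr; exact real_inner_le_norm u (u + v)
    _ = ‖u + v‖ := by field_simp

lemma sum_mul_norm_sub_le_of_sum_smul_sub_eq_zero {ω : ι → ℝ} (hω : ∀ i, 0 ≤ ω i)
    {a : ι → E} {x : E} (hgrad : ∑ i, (ω i / ‖x - a i‖) • (x - a i) = 0) (y : E) :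
    ∑ i, ω i * ‖x - a i‖ ≤ ∑ i, ω i * ‖y - a i‖ := by
  have hslope : ∑ i, ω i * (⟪x - a i, y - x⟫ / ‖x - a i‖) = 0 := by
    simpa [sum_inner, real_inner_smul_left, mul_div_assoc', div_mul_eq_mul_div] using
      congrArg (⟪·, y - x⟫) hgrad
  calc ∑ i, ω i * ‖x - a i‖
      = ∑ i, ω i * (‖x - a i‖ + ⟪x - a i, y - x⟫ / ‖x - a i‖) := by
        simp only [mul_add, sum_add_distrib, hslope, add_zero]
    _ ≤ ∑ i, ω i * ‖y - a i‖ := by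
        gcongr with i
        · exact hω i
        · simpa using norm_add_inner_div_norm_le_norm_add (x - a i) (y - x)

end

theorem stmt_19_general (n m : ℕ)
    (ω : Fin m → ℝ) (hω : ∀ i, 0 < ω i)
    (a : Fin m → EuclideanSpace ℝ (Fin n))
    (x : EuclideanSpace ℝ (Fin n))
    (hfix : (∑ i, ω i / ‖x - a i‖)⁻¹ • (∑ i, (ω i / ‖x - a i‖) • a i) = x) :
    ∀ y : EuclideanSpace ℝ (Fin n), ∑ i, ω i * ‖x - a i‖ ≤ ∑ i, ω i * ‖y - a i‖ :=
  sum_mul_norm_sub_le_of_sum_smul_sub_eq_zero (fun i => (hω i).le)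
    (sum_smul_sub_eq_zero_of_inv_sum_smul_sum_eq
      (fun i => div_nonneg (hω i).le (norm_nonneg _)) hfix)

/-- A fixed point of the Weiszfeld operator
`T(x) = (∑ ωᵢaᵢ/‖x-aᵢ‖) / (∑ ωᵢ/‖x-aᵢ‖)`, at a point `x` distinct from all anchor
points, is a global minimizer of the Fermat–Weber objective `f(y) = ∑ ωᵢ‖y-aᵢ‖`. -/
theorem stmt_19 (n m : ℕ)
    (ω : Fin m → ℝ) (hω : ∀ i, 0 < ω i)
    (a : Fin m → EuclideanSpace ℝ (Fin n))
    (x : EuclideanSpace ℝ (Fin n)) (hx : ∀ i, x ≠ a i)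
    (hfix : (∑ i, ω i / ‖x - a i‖)⁻¹ • (∑ i, (ω i / ‖x - a i‖) • a i) = x) :
    ∀ y : EuclideanSpace ℝ (Fin n), ∑ i, ω i * ‖x - a i‖ ≤ ∑ i, ω i * ‖y - a i‖ :=
  stmt_19_general n m ω hω a x hfix
end
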